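/- Let ρ be an X-type three-qubit state and let σ be its cyclic permutation to ordering CAB, i.e. σ_{(k,i,j),(k',i',j')} = ρ_{(i,j,k),(i',j',k')}. Let τ²_{CA|B} = (1/3)σ + (2/3)·(I₄/4 ⊗ Tr₁₂ σ), where Tr₁₂ traces out the first two factors of σ. Define Q²_{a,+} = (9/4)ρ₂₂ρ₇₇ + (3/4)(ρ₁₁ρ₇₇+ρ₅₅ρ₇₇+ρ₆₆ρ₇₇+ρ₂₂ρ₃₃+ρ₂₂ρ₄₄+ρ₂₂ρ₈₈) + (1/4)(ρ₁₁ρ₃₃+ρ₁₁ρ₄₄+ρ₁₁ρ₈₈+ρ₃₃ρ₅₅+ρ₄₄ρ₅₅+ρ₅₅ρ₈₈+ρ₃₃ρ₆₆+ρ₄₄ρ₆₆+ρ₆₆ρ₈₈), Q²_{b,+} = (9/4)ρ₁₁ρ₈₈ + (3/4)(ρ₁₁ρ₃₃+ρ₁₁ρ₄₄+ρ₁₁ρ₇₇+ρ₂₂ρ₈₈+ρ₅₅ρ₈₈+ρ₆₆ρ₈₈) + (1/4)(ρ₂₂ρ₃₃+ρ₂₂ρ₄₄+ρ₂₂ρ₇₇+ρ₃₃ρ₅₅+ρ₄₄ρ₅₅+ρ₅₅ρ₇₇+ρ₃₃ρ₆₆+ρ₄₄ρ₆₆+ρ₆₆ρ₇₇),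 Q²_{a,−} = (9/4)ρ₄₄ρ₅₅ + (3/4)(ρ₃₃ρ₅₅+ρ₅₅ρ₇₇+ρ₅₅ρ₈₈+ρ₁₁ρ₄₄+ρ₂₂ρ₄₄+ρ₄₄ρ₆₆) + (1/4)(ρ₁₁ρ₃₃+ρ₁₁ρ₇₇+ρ₁₁ρ₈₈+ρ₂₂ρ₃₃+ρ₂₂ρ₇₇+ρ₂₂ρ₈₈+ρ₃₃ρ₆₆+ρ₆₆ρ₇₇+ρ₆₆ρ₈₈), Q²_{b,−} = (9/4)ρ₃₃ρ₆₆ + (3/4)(ρ₁₁ρ₃₃+ρ₂₂ρ₃₃+ρ₃₃ρ₅₅+ρ₄₄ρ₆₆+ρ₆₆ρ₇₇+ρ₆₆ρ₈₈) + (1/4)(ρ₁₁ρ₄₄+ρ₁₁ρ₇₇+ρ₁₁ρ₈₈+ρ₂₂ρ₄₄+ρ₂₂ρ₇₇+ρ₂₂ρ₈₈+ρ₄₄ρ₅₅+ρ₅₅ρ₇₇+ρ₅₅ρ₈₈). If |ρ₁₈|² > Q²_{a,+}, or |ρ₂₇|² > Q²_{b,+}, or |ρ₃₆|² > Q²_{a,−},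 or |ρ₄₅|² > Q²_{b,−}, then the partial transpose of τ²_{CA|B} over its first qubit is not positive semidefinite (so τ²_{CA|B} is entangled). -/

import Mathlib

open scoped ComplexOrder

/-- Index type for three qubits: `(i, j, k)` with `m - 1 = 4i + 2j + k`. -/
abbrev Q3 : Type := Fin 2 × Fin 2 × Fin 2

/-- Partial transpose over the first qubit:
`(M^{T₁})_{(i,j,k),(i',j',k')} = M_{(i',j,k),(i,j',k')}`. -/
def ptA (M : Matrix Q3 Q3 ℂ) : Matrix Q3 Q3 ℂ :=
  Matrix.of fun p q : Q3 => M (q.1, p.2.1, p.2.2) (p.1, q.2.1, q.2.2)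

/-- An X-type three-qubit state: positive semidefinite (hence Hermitian), trace one,
and the only possibly nonzero entries are on the diagonal and the anti-diagonal. -/
def IsXType (ρ : Matrix Q3 Q3 ℂ) : Prop :=
  ρ.PosSemidef ∧ ρ.trace = 1 ∧
    ∀ p q : Q3, q ≠ p → q ≠ (1 - p.1, 1 - p.2.1, 1 - p.2.2) → ρ p q = 0

/-- Cyclic reordering of a three-qubit matrix to ordering CAB:
`σ_{(k,i,j),(k',i',j')} = ρ_{(i,j,k),(i',j',k')}`. -/
def sigmaCAB (ρ : Matrix Q3 Q3 ℂ) : Matrix Q3 Q3 ℂ :=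
  Matrix.of fun p q : Q3 => ρ (p.2.1, p.2.2, p.1) (q.2.1, q.2.2, q.1)

/-- The steered matrix `τ² = (1/3) M + (2/3) (I₄/4 ⊗ Tr₁₂ M)`,
where `Tr₁₂` traces out the first two qubits. -/
noncomputable def tauTwo (M : Matrix Q3 Q3 ℂ) : Matrix Q3 Q3 ℂ :=
  (1/3 : ℂ) • M +
    (2/3 : ℂ) • Matrix.of (fun p q : Q3 =>
      (if p.1 = q.1 ∧ p.2.1 = q.2.1 then (1/4 : ℂ) else 0) *
        ∑ i : Fin 2, ∑ j : Fin 2, M (i, j, p.2.2) (i, j, q.2.2))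


lemma key (M : Matrix Q3 Q3 ℂ) (hM : M.PosSemidef) (p q : Q3) :
    ‖M p q‖ ^ 2 ≤ (M p p).re * (M q q).re := by
  have hqp : M q p = starRingEnd ℂ (M p q) := by
    have := hM.1.apply q p; simpa [Complex.star_def] using this.symm
  have him : (M p p).im = 0 := by
    have h := congrArg Complex.im (hM.1.apply p p)
    simp only [Complex.star_def, Complex.conj_im] at h; linarith
  have him2 : (M q q).im = 0 := by
    have h := congrArg Complex.im (hM.1.apply q q)
    simp only [Complex.star_def, Complex.conj_im] at h; linarith
  have hpp0 : 0 ≤ (M p p).re := by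
    have h := hM.dotProduct_mulVec_nonneg (Pi.single p 1)
    have hsp : star (Pi.single p 1 : Q3 → ℂ) = Pi.single p 1 := by
      ext r; rcases eq_or_ne r p with h'|h' <;> simp [h', Pi.single_apply]
    rw [hsp, Matrix.mulVec_single, single_dotProduct] at h
    simpa using (Complex.le_def.mp h).1
  have hqq0 : 0 ≤ (M q q).re := by
    have h := hM.dotProduct_mulVec_nonneg (Pi.single q 1)
    have hsp : star (Pi.single q 1 : Q3 → ℂ) = Pi.single q 1 := by
      ext r; rcases eq_or_ne r q with h'|h' <;> simp [h', Pi.single_apply]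
    rw [hsp, Matrix.mulVec_single, single_dotProduct] at h
    simpa using (Complex.le_def.mp h).1
  set c := M p q with hc
  have hquad : ∀ t : ℝ, 0 ≤ (M p p).re * (t * t) + (2 * ‖c‖ ^ 2) * t
      + ‖c‖ ^ 2 * (M q q).re := by
    intro t
    have h := hM.dotProduct_mulVec_nonneg ((Pi.single p ((t:ℂ)) : Q3 → ℂ) + (Pi.single q (starRingEnd ℂ c) : Q3 → ℂ))
    rw [Matrix.mulVec_add, Matrix.mulVec_single, Matrix.mulVec_single, star_add] at h
    have hsp : star (Pi.single p ((t:ℂ)) : Q3 → ℂ) = Pi.single p ((t:ℂ)) := by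
      ext r; rcases eq_or_ne r p with h'|h' <;> simp [h', Pi.single_apply]
    have hsq : star (Pi.single q (starRingEnd ℂ c) : Q3 → ℂ) = Pi.single q c := by
      ext r; rcases eq_or_ne r q with h'|h' <;> simp [h', Pi.single_apply]
    rw [hsp, hsq, add_dotProduct, single_dotProduct,
      single_dotProduct] at h
    simp only [Pi.add_apply, Pi.smul_apply, Matrix.col_apply, op_smul_eq_mul] at h
    have h' := (Complex.le_def.mp h).1
    simp only [Complex.zero_re] at h'
    rw [hqp] at h'
    calc (0:ℝ) ≤ _ := h'
    _ = (M p p).re * (t*t) + (2 * ‖c‖ ^ 2) * t + ‖c‖ ^ 2 * (M q q).re := by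
        simp only [Complex.add_re, Complex.mul_re, Complex.mul_im, Complex.add_im,
          Complex.ofReal_re, Complex.ofReal_im, him, him2,
          Complex.conj_re, Complex.conj_im, Complex.sq_norm, Complex.normSq_apply,
          add_zero, zero_add, mul_zero, zero_mul, sub_zero, neg_zero, neg_neg]
        ring
  have hd := discrim_le_zero hquad
  rw [discrim] at hd
  have h3 : 0 ≤ ‖c‖ ^ 2 := sq_nonneg _
  rcases eq_or_lt_of_le h3 with h4|h4
  · nlinarith
  · nlinarith

set_option maxHeartbeats 1600000 in
/-- entanglement (NPT) criterion for `τ²_{CA|B}`, witnessing steering from Charlie and Alice to Bob. -/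
theorem tauTwo_CAB_npt (ρ : Matrix Q3 Q3 ℂ) (hX : IsXType ρ)
    (r11 r22 r33 r44 r55 r66 r77 r88 c18 c27 c36 c45 : ℝ)
    (hr11 : r11 = (ρ (0,0,0) (0,0,0)).re)
    (hr22 : r22 = (ρ (0,0,1) (0,0,1)).re)
    (hr33 : r33 = (ρ (0,1,0) (0,1,0)).re)
    (hr44 : r44 = (ρ (0,1,1) (0,1,1)).re)
    (hr55 : r55 = (ρ (1,0,0) (1,0,0)).re)
    (hr66 : r66 = (ρ (1,0,1) (1,0,1)).re)
    (hr77 : r77 = (ρ (1,1,0) (1,1,0)).re)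
    (hr88 : r88 = (ρ (1,1,1) (1,1,1)).re)
    (hc18 : c18 = ‖ρ (0,0,0) (1,1,1)‖)
    (hc27 : c27 = ‖ρ (0,0,1) (1,1,0)‖)
    (hc36 : c36 = ‖ρ (0,1,0) (1,0,1)‖)
    (hc45 : c45 = ‖ρ (0,1,1) (1,0,0)‖)
    (Q2ap Q2bp Q2am Q2bm : ℝ)
    (hQ2ap : Q2ap = 9/4 * (r22 * r77) + 3/4 * (r11 * r77 + r55 * r77 + r66 * r77 + r22 * r33 + r22 * r44 + r22 * r88) +
        1/4 * (r11 * r33 + r11 * r44 + r11 * r88 + r33 * r55 + r44 * r55 + r55 * r88 + r33 * r66 + r44 * r66 + r66 * r88))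
    (hQ2bp : Q2bp = 9/4 * (r11 * r88) + 3/4 * (r11 * r33 + r11 * r44 + r11 * r77 + r22 * r88 + r55 * r88 + r66 * r88) +
        1/4 * (r22 * r33 + r22 * r44 + r22 * r77 + r33 * r55 + r44 * r55 + r55 * r77 + r33 * r66 + r44 * r66 + r66 * r77))
    (hQ2am : Q2am = 9/4 * (r44 * r55) + 3/4 * (r33 * r55 + r55 * r77 + r55 * r88 + r11 * r44 + r22 * r44 + r44 * r66) +
        1/4 * (r11 * r33 + r11 * r77 + r11 * r88 + r22 * r33 + r22 * r77 + r22 * r88 + r33 * r66 + r66 * r77 + r66 * r88))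
    (hQ2bm : Q2bm = 9/4 * (r33 * r66) + 3/4 * (r11 * r33 + r22 * r33 + r33 * r55 + r44 * r66 + r66 * r77 + r66 * r88) +
        1/4 * (r11 * r44 + r11 * r77 + r11 * r88 + r22 * r44 + r22 * r77 + r22 * r88 + r44 * r55 + r55 * r77 + r55 * r88))
    (h : c18 ^ 2 > Q2ap ∨
         c27 ^ 2 > Q2bp ∨
         c36 ^ 2 > Q2am ∨
         c45 ^ 2 > Q2bm) :
    ¬ (ptA (tauTwo (sigmaCAB ρ))).PosSemidef := by
  intro hpsd
  set N := ptA (tauTwo (sigmaCAB ρ)) with hN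
  rcases h with h|h|h|h
  · have hod : N (1,0,0) (0,1,1) = (1/3 : ℂ) * ρ (0,0,0) (1,1,1) := by
      simp [hN, ptA, tauTwo, sigmaCAB, Fin.sum_univ_two]
    have hdp : (N (1,0,0) (1,0,0)).re = (ρ (0,0,1) (0,0,1)).re / 3 + ((ρ (0,0,0) (0,0,0)).re + (ρ (0,0,1) (0,0,1)).re + (ρ (1,0,0) (1,0,0)).re + (ρ (1,0,1) (1,0,1)).re) / 6 := by
      simp [hN, ptA, tauTwo, sigmaCAB, Fin.sum_univ_two, Complex.add_re, Complex.mul_re]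
      ring
    have hdq : (N (0,1,1) (0,1,1)).re = (ρ (1,1,0) (1,1,0)).re / 3 + ((ρ (0,1,0) (0,1,0)).re + (ρ (0,1,1) (0,1,1)).re + (ρ (1,1,0) (1,1,0)).re + (ρ (1,1,1) (1,1,1)).re) / 6 := by
      simp [hN, ptA, tauTwo, sigmaCAB, Fin.sum_univ_two, Complex.add_re, Complex.mul_re]
      ring
    have hk := key N hpsd (1,0,0) (0,1,1)
    rw [hod, hdp, hdq, norm_mul] at hk
    simp only [norm_div, norm_one, Complex.norm_ofNat] at hk
    have habs1 : ‖(1/3 : ℂ)‖ = 1/3 := by norm_num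
    subst hr11 hr22 hr33 hr44 hr55 hr66 hr77 hr88 hc18 hQ2ap hQ2bp hQ2am hQ2bm
    nlinarith [hk, norm_nonneg (ρ (0,0,0) (1,1,1))]
  · have hod : N (0,0,0) (1,1,1) = (1/3 : ℂ) * ρ (0,0,1) (1,1,0) := by
      simp [hN, ptA, tauTwo, sigmaCAB, Fin.sum_univ_two]
    have hdp : (N (0,0,0) (0,0,0)).re = (ρ (0,0,0) (0,0,0)).re / 3 + ((ρ (0,0,0) (0,0,0)).re + (ρ (0,0,1) (0,0,1)).re + (ρ (1,0,0) (1,0,0)).re + (ρ (1,0,1) (1,0,1)).re) / 6 := by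
      simp [hN, ptA, tauTwo, sigmaCAB, Fin.sum_univ_two, Complex.add_re, Complex.mul_re]
      ring
    have hdq : (N (1,1,1) (1,1,1)).re = (ρ (1,1,1) (1,1,1)).re / 3 + ((ρ (0,1,0) (0,1,0)).re + (ρ (0,1,1) (0,1,1)).re + (ρ (1,1,0) (1,1,0)).re + (ρ (1,1,1) (1,1,1)).re) / 6 := by
      simp [hN, ptA, tauTwo, sigmaCAB, Fin.sum_univ_two, Complex.add_re, Complex.mul_re]
      ring
    have hk := key N hpsd (0,0,0) (1,1,1)
    rw [hod, hdp, hdq, norm_mul] at hk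
    simp only [norm_div, norm_one, Complex.norm_ofNat] at hk
    have habs1 : ‖(1/3 : ℂ)‖ = 1/3 := by norm_num
    subst hr11 hr22 hr33 hr44 hr55 hr66 hr77 hr88 hc27 hQ2ap hQ2bp hQ2am hQ2bm
    nlinarith [hk, norm_nonneg (ρ (0,0,1) (1,1,0))]
  · have hod : N (1,0,1) (0,1,0) = (1/3 : ℂ) * ρ (0,1,0) (1,0,1) := by
      simp [hN, ptA, tauTwo, sigmaCAB, Fin.sum_univ_two]
    have hdp : (N (1,0,1) (1,0,1)).re = (ρ (0,1,1) (0,1,1)).re / 3 + ((ρ (0,1,0) (0,1,0)).re + (ρ (0,1,1) (0,1,1)).re + (ρ (1,1,0) (1,1,0)).re + (ρ (1,1,1) (1,1,1)).re) / 6 := by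
      simp [hN, ptA, tauTwo, sigmaCAB, Fin.sum_univ_two, Complex.add_re, Complex.mul_re]
      ring
    have hdq : (N (0,1,0) (0,1,0)).re = (ρ (1,0,0) (1,0,0)).re / 3 + ((ρ (0,0,0) (0,0,0)).re + (ρ (0,0,1) (0,0,1)).re + (ρ (1,0,0) (1,0,0)).re + (ρ (1,0,1) (1,0,1)).re) / 6 := by
      simp [hN, ptA, tauTwo, sigmaCAB, Fin.sum_univ_two, Complex.add_re, Complex.mul_re]
      ring
    have hk := key N hpsd (1,0,1) (0,1,0)
    rw [hod, hdp, hdq, norm_mul] at hk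
    simp only [norm_div, norm_one, Complex.norm_ofNat] at hk
    have habs1 : ‖(1/3 : ℂ)‖ = 1/3 := by norm_num
    subst hr11 hr22 hr33 hr44 hr55 hr66 hr77 hr88 hc36 hQ2ap hQ2bp hQ2am hQ2bm
    nlinarith [hk, norm_nonneg (ρ (0,1,0) (1,0,1))]
  · have hod : N (0,0,1) (1,1,0) = (1/3 : ℂ) * ρ (0,1,1) (1,0,0) := by
      simp [hN, ptA, tauTwo, sigmaCAB, Fin.sum_univ_two]
    have hdp : (N (0,0,1) (0,0,1)).re = (ρ (0,1,0) (0,1,0)).re / 3 + ((ρ (0,1,0) (0,1,0)).re + (ρ (0,1,1) (0,1,1)).re + (ρ (1,1,0) (1,1,0)).re + (ρ (1,1,1) (1,1,1)).re) / 6 := by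
      simp [hN, ptA, tauTwo, sigmaCAB, Fin.sum_univ_two, Complex.add_re, Complex.mul_re]
      ring
    have hdq : (N (1,1,0) (1,1,0)).re = (ρ (1,0,1) (1,0,1)).re / 3 + ((ρ (0,0,0) (0,0,0)).re + (ρ (0,0,1) (0,0,1)).re + (ρ (1,0,0) (1,0,0)).re + (ρ (1,0,1) (1,0,1)).re) / 6 := by
      simp [hN, ptA, tauTwo, sigmaCAB, Fin.sum_univ_two, Complex.add_re, Complex.mul_re]
      ring
    have hk := key N hpsd (0,0,1) (1,1,0)
    rw [hod, hdp, hdq, norm_mul] at hk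
    simp only [norm_div, norm_one, Complex.norm_ofNat] at hk
    have habs1 : ‖(1/3 : ℂ)‖ = 1/3 := by norm_num
    subst hr11 hr22 hr33 hr44 hr55 hr66 hr77 hr88 hc45 hQ2ap hQ2bp hQ2am hQ2bm
    nlinarith [hk, norm_nonneg (ρ (0,1,1) (1,0,0))]
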